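/- arXiv:0710.2106 — 5 statements merged into one kernel-verified Lean document; each statement's English description precedes it below -/
import Mathlib

section
/- For every real K ≥ 2 and every sufficiently large n, there exists a simple graph G on n vertices such that every induced subgraph of G that is K-nearly regular has at most 7·K·n / log₂ n vertices. -/
open scoped Classical

/-- Degree of `v` in the subgraph of `G` induced on `s`. -/
noncomputable def degOn {V : Type*} (G : SimpleGraph V) (s : Finset V) (v : V) : ℕ :=
  (s.filter (fun w => G.Adj v w)).card

/-- Number of edges of `G` with both endpoints in `s` (the edges of `G[s]`). -/
noncomputable def edgesOn {V : Type*} [Fintype V] (G : SimpleGraph V) (s : Finset V) : ℕ :=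
  (Finset.univ.filter (fun e : Sym2 V => e ∈ G.edgeSet ∧ ∀ v ∈ e, v ∈ s)).card

/-- `G[s]` is `c`-nearly regular: its maximum degree is at most `c` times its minimum degree. -/
def NearlyRegularOn {V : Type*} (G : SimpleGraph V) (s : Finset V) (c : ℝ) : Prop :=
  ∀ v ∈ s, ∀ w ∈ s, (degOn G s v : ℝ) ≤ c * (degOn G s w : ℝ)

/-!
The graph is a disjoint union of cliques of harmonically decreasing sizes: vertex `x < n` gets
the color `⌊exp (x / L)⌋₊` with `L = 2n / log n`, so color `i` is carried by at most `L / i + 1`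
vertices and there are at most `√n` colors. An induced subgraph meets every clique in a clique,
so its degrees are its class sizes minus one. If its minimum degree `δ` is `0`, near-regularity
makes it edgeless, hence it has at most `√n` vertices. Otherwise only the colors `i ≤ L / δ` can
host a class of `δ + 1` vertices, and every class has at most `Kδ + 1 ≤ 2Kδ` vertices, which
gives at most `2KL = 4Kn / log n` vertices.
-/

open Finset

theorem card_le_of_forall_mem_Icc_one {S : Finset ℕ} {N : ℕ} (hS : ∀ i ∈ S, 1 ≤ i ∧ i ≤ N) :
    #S ≤ N := by
  simpa using card_le_card fun i hi => mem_Icc.2 (hS i hi)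

theorem card_le_of_forall_mem_Ico {S : Finset ℕ} {A B : ℝ} (hA : 0 ≤ A) (hAB : A ≤ B)
    (hS : ∀ x ∈ S, A ≤ x ∧ (x : ℝ) < B) : (#S : ℝ) ≤ B - A + 1 := by
  have hsub : S ⊆ Ico ⌈A⌉₊ ⌈B⌉₊ := fun x hx => by
    obtain ⟨hAx, hxB⟩ := hS x hx
    exact mem_Ico.2 ⟨Nat.ceil_le.2 hAx, Nat.lt_ceil.2 hxB⟩
  have hcard : (#S : ℝ) ≤ ⌈B⌉₊ - ⌈A⌉₊ := by
    rw [← Nat.cast_sub (Nat.ceil_mono hAB), ← Nat.card_Ico]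
    exact_mod_cast card_le_card hsub
  linarith [Nat.le_ceil A, Nat.ceil_lt_add_one (hA.trans hAB)]

def sameColorGraph {V α : Type*} (f : V → α) : SimpleGraph V where
  Adj v w := v ≠ w ∧ f v = f w
  symm := ⟨fun _ _ h => ⟨h.1.symm, h.2.symm⟩⟩
  loopless := ⟨fun _ h => h.1 rfl⟩

section SameColor

variable {V α : Type*} {f : V → α} {s : Finset V}

@[simp]
theorem sameColorGraph_adj {v w : V} : (sameColorGraph f).Adj v w ↔ v ≠ w ∧ f v = f w := Iff.rfl

theorem degOn_sameColorGraph_add_one [DecidableEq α] {v : V} (hv : v ∈ s) :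
    degOn (sameColorGraph f) s v + 1 = #{u ∈ s | f u = f v} := by
  have hnbr : {u ∈ s | (sameColorGraph f).Adj v u} = {u ∈ s | f u = f v}.erase v := by
    ext u
    simp only [sameColorGraph_adj, mem_filter, mem_erase]
    constructor
    · rintro ⟨hu, hvu, hf⟩
      exact ⟨Ne.symm hvu, hu, hf.symm⟩
    · rintro ⟨huv, hu, hf⟩
      exact ⟨hu, Ne.symm huv, hf.symm⟩
  rw [degOn, hnbr, card_erase_add_one (mem_filter.2 ⟨hv, rfl⟩ : v ∈ {u ∈ s | f u = f v})]

theorem injOn_of_forall_degOn_sameColorGraph_eq_zero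
    (h : ∀ v ∈ s, degOn (sameColorGraph f) s v = 0) : Set.InjOn f s := by
  intro u hu v hv huv
  by_contra hne
  have hadj : v ∈ {w ∈ s | (sameColorGraph f).Adj u w} := mem_filter.2 ⟨hv, sameColorGraph_adj.2 ⟨hne, huv⟩⟩
  exact (card_pos.2 ⟨v, hadj⟩).ne' (h u hu)

end SameColor

theorem card_le_of_class_card_bounds {V : Type*} {f : V → ℕ} {s : Finset V} {K X : ℝ} {δ : ℕ}
    (hK : 1 ≤ K) (hX : 0 ≤ X) (hδ : 1 ≤ δ) (hcolor : ∀ v ∈ s, 1 ≤ f v)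
    (hclass : ∀ v ∈ s, δ + 1 ≤ #{u ∈ s | f u = f v} ∧ (#{u ∈ s | f u = f v} : ℝ) ≤ K * δ + 1)
    (hsmall : ∀ v ∈ s, (#{u ∈ s | f u = f v} : ℝ) ≤ X / f v + 1) :
    (#s : ℝ) ≤ 2 * K * X := by
  have hδR : (1 : ℝ) ≤ δ := by exact_mod_cast hδ
  -- a class of color `i` has more than `δ` but at most `X / i + 1` vertices, so `i ≤ X / δ`
  have hcolors : (#(s.image f) : ℝ) ≤ X / δ := by
    refine le_trans ?_ (Nat.floor_le (by positivity))
    suffices #(s.image f) ≤ ⌊X / δ⌋₊ by exact_mod_cast this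
    refine card_le_of_forall_mem_Icc_one fun i hi => ?_
    obtain ⟨v, hv, rfl⟩ := mem_image.1 hi
    refine ⟨hcolor v hv, Nat.le_floor ?_⟩
    have hi : (0 : ℝ) < f v := by exact_mod_cast hcolor v hv
    have hlarge : ((δ + 1 : ℕ) : ℝ) ≤ #{u ∈ s | f u = f v} := by exact_mod_cast (hclass v hv).1
    have := hlarge.trans (hsmall v hv)
    push_cast at this
    have hδX : (δ : ℝ) ≤ X / f v := by linarith
    rwa [le_div_iff₀ hi, mul_comm, ← le_div_iff₀ (by positivity)] at hδX
  have hsum : (#s : ℝ) ≤ #(s.image f) * (K * δ + 1) := by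
    rw [card_eq_sum_card_image f s]
    push_cast
    refine (sum_le_card_nsmul _ _ _ fun i hi => ?_).trans_eq (nsmul_eq_mul _ _)
    obtain ⟨v, hv, rfl⟩ := mem_image.1 hi
    exact (hclass v hv).2
  calc (#s : ℝ) ≤ X / δ * (K * δ + 1) := hsum.trans (by gcongr)
    _ ≤ X / δ * (2 * K * δ) := by gcongr; nlinarith
    _ = 2 * K * X := by field_simp

theorem card_le_max_of_nearlyRegularOn_sameColorGraph {V : Type*} {f : V → ℕ} {s : Finset V}
    {K X : ℝ} {T : ℕ} (hK : 1 ≤ K) (hX : 0 ≤ X) (hcolor : ∀ v ∈ s, 1 ≤ f v ∧ f v ≤ T)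
    (hsmall : ∀ v ∈ s, (#{u ∈ s | f u = f v} : ℝ) ≤ X / f v + 1)
    (hs : NearlyRegularOn (sameColorGraph f) s K) : (#s : ℝ) ≤ max (T : ℝ) (2 * K * X) := by
  rcases s.eq_empty_or_nonempty with rfl | hne
  · simp
  obtain ⟨w, hw, hmin⟩ := s.exists_min_image (degOn (sameColorGraph f) s) hne
  rcases Nat.eq_zero_or_pos (degOn (sameColorGraph f) s w) with hw0 | hw0
  · have hzero : ∀ v ∈ s, degOn (sameColorGraph f) s v = 0 := fun v hv => by
      have := hs v hv w hw
      rw [hw0, Nat.cast_zero, mul_zero] at this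
      exact_mod_cast this.antisymm (Nat.cast_nonneg _)
    have hcard : #s ≤ T := by
      rw [← card_image_of_injOn (injOn_of_forall_degOn_sameColorGraph_eq_zero hzero)]
      refine card_le_of_forall_mem_Icc_one fun i hi => ?_
      obtain ⟨v, hv, rfl⟩ := mem_image.1 hi
      exact hcolor v hv
    exact le_max_of_le_left (by exact_mod_cast hcard)
  · refine le_max_of_le_right (card_le_of_class_card_bounds hK hX hw0
      (fun v hv => (hcolor v hv).1) (fun v hv => ?_) hsmall)
    rw [← degOn_sameColorGraph_add_one (f := f) hv]
    exact ⟨by simpa using hmin v hv, by push_cast; linarith [hs v hv w hw]⟩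

noncomputable def expColor (L : ℝ) (x : ℕ) : ℕ := ⌊Real.exp (x / L)⌋₊

theorem one_le_expColor {L : ℝ} (hL : 0 ≤ L) (x : ℕ) : 1 ≤ expColor L x :=
  Nat.le_floor (by simpa using Real.one_le_exp (by positivity))

theorem expColor_le {L : ℝ} (hL : 0 < L) {x : ℕ} {y : ℝ} (hx : x ≤ y) :
    (expColor L x : ℝ) ≤ Real.exp (y / L) :=
  (Nat.floor_le (Real.exp_pos _).le).trans (by gcongr)

theorem log_le_div_lt_log_of_expColor_eq {L : ℝ} {x i : ℕ} (hi : 1 ≤ i) (h : expColor L x = i) :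
    Real.log i ≤ x / L ∧ x / L < Real.log (i + 1) := by
  rw [expColor, Nat.floor_eq_iff (Real.exp_pos _).le] at h
  have hi0 : (0 : ℝ) < i := by exact_mod_cast hi
  exact ⟨(Real.log_le_iff_le_exp hi0).2 h.1, (Real.lt_log_iff_exp_lt (by linarith)).2 h.2⟩

theorem card_le_of_forall_expColor_eq {L : ℝ} (hL : 0 < L) {i : ℕ} (hi : 1 ≤ i) {S : Finset ℕ}
    (hS : ∀ x ∈ S, expColor L x = i) : (#S : ℝ) ≤ L / i + 1 := by
  have hi0 : (0 : ℝ) < i := by exact_mod_cast hi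
  have hgap : Real.log (i + 1) - Real.log i ≤ 1 / i := by
    rw [← Real.log_div (by positivity) hi0.ne']
    calc Real.log ((i + 1) / i) ≤ (i + 1) / i - 1 := Real.log_le_sub_one_of_pos (by positivity)
      _ = 1 / i := by field_simp; ring
  have hlog : 0 ≤ Real.log i := Real.log_nonneg (by exact_mod_cast hi)
  have hmono : Real.log i ≤ Real.log (i + 1) := Real.log_le_log hi0 (by linarith)
  calc (#S : ℝ) ≤ L * Real.log (i + 1) - L * Real.log i + 1 := by
        refine card_le_of_forall_mem_Ico (by positivity) (by gcongr) fun x hx => ?_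
        obtain ⟨h1, h2⟩ := log_le_div_lt_log_of_expColor_eq hi (hS x hx)
        constructor
        · rwa [le_div_iff₀' hL] at h1
        · rwa [div_lt_iff₀' hL] at h2
    _ ≤ L * (1 / i) + 1 := by rw [← mul_sub]; gcongr
    _ = L / i + 1 := by ring

theorem sqrt_le_mul_div_logb {K x : ℝ} (hK : 1 ≤ K) (hx : 1 < x) :
    √x ≤ 7 * K * x / Real.logb 2 x := by
  have hx0 : 0 < x := by linarith
  have hsqrt : 0 < √x := Real.sqrt_pos.2 hx0
  have hlog : Real.log x < 2 * √x := by
    have := Real.log_le_sub_one_of_pos hsqrt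
    rw [Real.log_sqrt hx0.le] at this
    linarith
  rw [Real.logb, div_div_eq_mul_div, le_div_iff₀ (Real.log_pos hx)]
  calc √x * Real.log x ≤ √x * (2 * √x) := by gcongr
    _ = 2 * x := by rw [mul_left_comm, Real.mul_self_sqrt hx0.le]
    _ ≤ 7 * K * x * Real.log 2 := by
      have : 2 ≤ 7 * K * Real.log 2 := by nlinarith [Real.log_two_gt_d9]
      nlinarith

theorem mul_div_log_le_mul_div_logb {K x : ℝ} (hK : 0 ≤ K) (hx : 1 < x) :
    2 * K * (2 * x / Real.log x) ≤ 7 * K * x / Real.logb 2 x := by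
  rw [Real.logb, div_div_eq_mul_div, ← mul_div_assoc]
  refine div_le_div_of_nonneg_right ?_ (Real.log_pos hx).le
  nlinarith [Real.log_two_gt_d9, mul_nonneg hK (by linarith : (0 : ℝ) ≤ x)]

/-- For every `K ≥ 2` and every sufficiently large `n` there is a graph on `n` vertices in
which every `K`-nearly regular induced subgraph has at most `7 K n / log₂ n` vertices. -/
theorem stmt4 :
    ∀ K : ℝ, 2 ≤ K → ∃ N : ℕ, ∀ n : ℕ, N ≤ n →
      ∃ G : SimpleGraph (Fin n), ∀ s : Finset (Fin n), NearlyRegularOn G s K →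
        (s.card : ℝ) ≤ 7 * K * (n : ℝ) / Real.logb 2 n := by
  intro K hK
  refine ⟨2, fun n hn => ?_⟩
  have hn1 : (1 : ℝ) < n := by exact_mod_cast hn
  set L : ℝ := 2 * n / Real.log n
  have hL : 0 < L := div_pos (by positivity) (Real.log_pos hn1)
  have htop : Real.exp (n / L) = √n := by
    have : (n : ℝ) / L = Real.log n / 2 := by
      have := (Real.log_pos hn1).ne'
      simp only [L]
      field_simp
    rw [this, ← Real.log_sqrt (by positivity), Real.exp_log (by positivity)]
  let f : Fin n → ℕ := fun v => expColor L v
  refine ⟨sameColorGraph f, fun s hs => ?_⟩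
  have hcolor : ∀ v ∈ s, 1 ≤ f v ∧ f v ≤ ⌊√n⌋₊ := fun v _ =>
    ⟨one_le_expColor hL.le v,
      Nat.le_floor ((expColor_le hL (by exact_mod_cast v.isLt.le)).trans_eq htop)⟩
  have hsmall : ∀ v ∈ s, (#{u ∈ s | f u = f v} : ℝ) ≤ L / f v + 1 := fun v hv => by
    rw [← card_image_of_injective _ Fin.val_injective]
    refine card_le_of_forall_expColor_eq hL (hcolor v hv).1 fun x hx => ?_
    obtain ⟨u, hu, rfl⟩ := mem_image.1 hx
    exact (mem_filter.1 hu).2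
  calc (#s : ℝ) ≤ max (⌊√n⌋₊ : ℝ) (2 * K * L) :=
        card_le_max_of_nearlyRegularOn_sameColorGraph (by linarith) hL.le hcolor hsmall hs
    _ ≤ 7 * K * n / Real.logb 2 n :=
        max_le ((Nat.floor_le (by positivity)).trans (sqrt_le_mul_div_logb (by linarith) hn1))
          (mul_div_log_le_mul_div_logb (by linarith) hn1)
end

section
/- Let K > 1 and 0 < α < 1/2 be reals. Every simple graph G on n vertices with average degree d = d(G) and maximum degree Δ(G) ≤ K·d contains an induced subgraph G* that is (K/α)-nearly regular, has at least ((1−2α)/(K−2α))·n vertices, and has at least ((K−2Kα)/(2K−4α))·n·d edges. -/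
/-!
Delete, one at a time, vertices of degree less than `α d` in the current induced subgraph.
Each deletion destroys fewer than `α d` edges, so the surviving set `t` spans more than
`n d / 2 - (n - |t|) α d` edges; on the other hand every degree in `G[t]` is at most `K d`,
so `2 e(t) ≤ |t| K d`. These two inequalities give both lower bounds, and minimum degree
`≥ α d` against maximum degree `≤ K d` makes `G[t]` `(K/α)`-nearly regular.
-/

open scoped Classical

section InducedCounts

variable {V : Type*} (G : SimpleGraph V)

lemma degOn_mono {s t : Finset V} (h : s ⊆ t) (v : V) : degOn G s v ≤ degOn G t v :=
  Finset.card_le_card (Finset.filter_subset_filter _ h)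

lemma degOn_insert_self (s : Finset V) (v : V) : degOn G (insert v s) v = degOn G s v := by
  simp [degOn, Finset.filter_insert]

lemma degOn_insert_of_notMem {s : Finset V} {v : V} (hv : v ∉ s) (w : V) :
    degOn G (insert v s) w = degOn G s w + if G.Adj w v then 1 else 0 := by
  unfold degOn
  rw [Finset.filter_insert]
  split_ifs with h
  · exact Finset.card_insert_of_notMem (by simp [hv])
  · rfl

lemma sum_adj_eq_degOn (s : Finset V) (v : V) :
    ∑ w ∈ s, (if G.Adj w v then 1 else 0) = degOn G s v := by
  simp [degOn, Finset.sum_boole, G.adj_comm]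

variable [Fintype V]

lemma edgesOn_empty : edgesOn G ∅ = 0 := by
  refine Finset.card_eq_zero.mpr (Finset.filter_eq_empty_iff.mpr fun e _ ⟨_, h⟩ => ?_)
  induction e using Sym2.ind with
  | _ a b => simpa using h a (Sym2.mem_mk_left a b)

lemma edgesOn_eq_edgesOn_erase_add_degOn {s : Finset V} {v : V} (hv : v ∈ s) :
    edgesOn G s = edgesOn G (s.erase v) + degOn G s v := by
  have hinj : Function.Injective (fun w : V => s(v, w)) := fun _ _ => Sym2.congr_right.mp
  have hsplit : Finset.univ.filter (fun e : Sym2 V => e ∈ G.edgeSet ∧ ∀ w ∈ e, w ∈ s)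
      = Finset.univ.filter (fun e : Sym2 V => e ∈ G.edgeSet ∧ ∀ w ∈ e, w ∈ s.erase v)
        ∪ (s.filter (fun w => G.Adj v w)).image (fun w => s(v, w)) := by
    ext e
    induction e using Sym2.ind with
    | _ a b =>
      simp only [Finset.mem_filter, Finset.mem_union, Finset.mem_image, Finset.mem_univ,
        true_and, SimpleGraph.mem_edgeSet, Sym2.mem_iff, Finset.mem_erase, Sym2.eq_iff,
        or_imp, forall_and, forall_eq]
      constructor
      · rintro ⟨hab, ha, hb⟩
        by_cases hva : v = a
        · exact Or.inr ⟨b, ⟨hb, hva ▸ hab⟩, Or.inl ⟨hva, rfl⟩⟩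
        by_cases hvb : v = b
        · exact Or.inr ⟨a, ⟨ha, hvb ▸ hab.symm⟩, Or.inr ⟨hvb, rfl⟩⟩
        exact Or.inl ⟨hab, ⟨Ne.symm hva, Ne.symm hvb⟩, ha, hb⟩
      · rintro (⟨hab, -, ha, hb⟩ | ⟨w, ⟨hw, hadj⟩, ⟨rfl, rfl⟩ | ⟨rfl, rfl⟩⟩)
        · exact ⟨hab, ha, hb⟩
        · exact ⟨hadj, hv, hw⟩
        · exact ⟨hadj.symm, hw, hv⟩
  have hdisj : Disjoint (Finset.univ.filter
      (fun e : Sym2 V => e ∈ G.edgeSet ∧ ∀ w ∈ e, w ∈ s.erase v))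
      ((s.filter (fun w => G.Adj v w)).image (fun w => s(v, w))) := by
    rw [Finset.disjoint_right]
    intro _ he hmem
    obtain ⟨w, -, rfl⟩ := Finset.mem_image.mp he
    exact Finset.notMem_erase v s ((Finset.mem_filter.mp hmem).2.2 v (Sym2.mem_mk_left v w))
  rw [edgesOn, hsplit, Finset.card_union_of_disjoint hdisj,
    Finset.card_image_of_injective _ hinj]
  rfl

lemma sum_degOn_eq_two_mul_edgesOn (s : Finset V) :
    ∑ v ∈ s, degOn G s v = 2 * edgesOn G s := by
  induction s using Finset.induction_on with
  | empty => simp [edgesOn_empty]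
  | @insert v s hv ih =>
    have hE := edgesOn_eq_edgesOn_erase_add_degOn G (Finset.mem_insert_self v s)
    rw [Finset.erase_insert hv, degOn_insert_self] at hE
    rw [Finset.sum_insert hv, degOn_insert_self,
      Finset.sum_congr rfl fun w _ => degOn_insert_of_notMem G hv w, Finset.sum_add_distrib,
      sum_adj_eq_degOn, ih, hE]
    ring

lemma two_mul_edgesOn_le {s : Finset V} {D : ℝ} (hD : ∀ v ∈ s, (degOn G s v : ℝ) ≤ D) :
    2 * (edgesOn G s : ℝ) ≤ s.card * D := by
  have hsum := Finset.sum_le_card_nsmul s (fun v => (degOn G s v : ℝ)) D hD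
  rwa [nsmul_eq_mul, ← Nat.cast_sum, sum_degOn_eq_two_mul_edgesOn, Nat.cast_mul,
    Nat.cast_ofNat] at hsum

lemma exists_subset_forall_le_degOn (s : Finset V) (c : ℝ) :
    ∃ t ⊆ s, (∀ v ∈ t, c ≤ (degOn G t v : ℝ)) ∧
      (edgesOn G s : ℝ) ≤ edgesOn G t + (s.card - t.card) * c := by
  induction s using Finset.strongInduction with
  | _ s ih =>
    by_cases hmin : ∀ v ∈ s, c ≤ (degOn G s v : ℝ)
    · exact ⟨s, subset_rfl, hmin, by simp⟩
    push Not at hmin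
    obtain ⟨v, hv, hdeg⟩ := hmin
    obtain ⟨t, hts, htmin, hbound⟩ := ih (s.erase v) (Finset.erase_ssubset hv)
    refine ⟨t, hts.trans (Finset.erase_subset v s), htmin, ?_⟩
    have hE : (edgesOn G s : ℝ) = edgesOn G (s.erase v) + degOn G s v := by
      exact_mod_cast edgesOn_eq_edgesOn_erase_add_degOn G hv
    rw [Finset.cast_card_erase_of_mem hv] at hbound
    linarith

end InducedCounts

lemma nearlyRegularOn_of_degOn_bounds {V : Type*} (G : SimpleGraph V) {s : Finset V}
    {c a : ℝ} (hc : 0 ≤ c) (hmax : ∀ v ∈ s, (degOn G s v : ℝ) ≤ c * a)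
    (hmin : ∀ v ∈ s, a ≤ (degOn G s v : ℝ)) : NearlyRegularOn G s c :=
  fun v hv w hw => (hmax v hv).trans (mul_le_mul_of_nonneg_left (hmin w hw) hc)

lemma lower_bounds_of_peeling {K α n d T E : ℝ} (hα : 0 ≤ α) (hαK : 2 * α < K) (hd : 0 < d)
    (hpeel : n * d / 2 ≤ E + (n - T) * (α * d)) (hE : 2 * E ≤ T * (K * d)) :
    (1 - 2 * α) / (K - 2 * α) * n ≤ T ∧ (K - 2 * K * α) / (2 * K - 4 * α) * n * d ≤ E := by
  have hK : 0 < K - 2 * α := by linarith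
  have hT : (1 - 2 * α) * n ≤ T * (K - 2 * α) := by nlinarith
  have hT' : (1 - 2 * α) / (K - 2 * α) * n ≤ T := by
    rw [div_mul_eq_mul_div, div_le_iff₀ hK]
    linarith
  refine ⟨hT', ?_⟩
  calc (K - 2 * K * α) / (2 * K - 4 * α) * n * d
      = n * d / 2 - n * (α * d) + (1 - 2 * α) / (K - 2 * α) * n * (α * d) := by
        rw [show 2 * K - 4 * α = 2 * (K - 2 * α) by ring]
        field_simp
        ring
    _ ≤ n * d / 2 - n * (α * d) + T * (α * d) := by gcongr
    _ ≤ E := by linarith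

/-- Every graph on `n` vertices with average degree `d` and maximum degree at most `K d`
contains an induced `(K/α)`-nearly regular subgraph with at least `((1-2α)/(K-2α)) n`
vertices and at least `((K-2Kα)/(2K-4α)) n d` edges. -/
theorem stmt5 :
    ∀ K α : ℝ, 1 < K → 0 < α → α < 1 / 2 → ∀ n : ℕ, ∀ G : SimpleGraph (Fin n), ∀ d : ℝ,
      d = 2 * (edgesOn G Finset.univ : ℝ) / (n : ℝ) →
      (∀ v : Fin n, (degOn G Finset.univ v : ℝ) ≤ K * d) →
      ∃ s : Finset (Fin n), NearlyRegularOn G s (K / α) ∧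
        (1 - 2 * α) / (K - 2 * α) * (n : ℝ) ≤ (s.card : ℝ) ∧
        (K - 2 * K * α) / (2 * K - 4 * α) * (n : ℝ) * d ≤ (edgesOn G s : ℝ) := by
  intro K α hK hα hα2 n G d hd hmax
  have hdeg (s : Finset (Fin n)) (v : Fin n) : (degOn G s v : ℝ) ≤ K / α * (α * d) := by
    rw [show K / α * (α * d) = K * d by field_simp]
    exact (Nat.cast_le.mpr (degOn_mono G (Finset.subset_univ s) v)).trans (hmax v)
  rcases le_or_gt d 0 with hd0 | hd0
  · -- `d ≤ 0` leaves no edges, and all of `G` will do.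
    refine ⟨Finset.univ, nearlyRegularOn_of_degOn_bounds G (by positivity)
      (fun v _ => hdeg _ v) (fun v _ => ?_), ?_, ?_⟩
    · exact (mul_nonpos_of_nonneg_of_nonpos hα.le hd0).trans (Nat.cast_nonneg _)
    · rw [Finset.card_univ, Fintype.card_fin]
      exact mul_le_of_le_one_left n.cast_nonneg ((div_le_one (by linarith)).mpr (by linarith))
    · refine le_trans (mul_nonpos_of_nonneg_of_nonpos ?_ hd0) (Nat.cast_nonneg _)
      exact mul_nonneg (div_nonneg (by nlinarith) (by linarith)) n.cast_nonneg
  have hn : (n : ℝ) ≠ 0 := fun hn => by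
    rw [hn, div_zero] at hd
    linarith
  have hEuniv : (edgesOn G Finset.univ : ℝ) = n * d / 2 := by
    rw [hd]
    field_simp
  obtain ⟨t, -, hmin, hpeel⟩ := exists_subset_forall_le_degOn G Finset.univ (α * d)
  rw [hEuniv, Finset.card_univ, Fintype.card_fin] at hpeel
  have hE := two_mul_edgesOn_le G fun v (_ : v ∈ t) => (hmax v).trans' <|
    Nat.cast_le.mpr (degOn_mono G (Finset.subset_univ t) v)
  exact ⟨t, nearlyRegularOn_of_degOn_bounds G (by positivity) (fun v _ => hdeg t v) hmin,
    lower_bounds_of_peeling hα.le (by linarith) hd0 hpeel hE⟩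
end

section
/- Let K > 1 be a real. Every simple graph G on n ≥ 1 vertices contains an induced subgraph G* on at least n^(1 + log₂(1 − 1/K)) vertices satisfying Δ(G*) ≤ K·d(G*), where d(G*) is the average degree of G*. -/
/-!
Induct on an upper bound `D` for the degrees of `G[s]`, proving `|t| ≥ |s| (D + 1) ^ α` with
`α = log₂ (1 - 1/K)`. If `G[s]` already has maximum degree at most `K` times its average degree,
take `t = s`. Otherwise `2 K e(s) < D |s|`, so deleting vertices of degree above `h = ⌊D/2⌋` one at
a time (each deletion removes more than `h` edges) loses fewer than `|s| D / (2 K (h + 1))`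
vertices and leaves a graph of maximum degree at most `h`. Bernoulli's inequality,
`2 ^ c ≤ 1 + c ≤ (D + 1)/(h + 1)` and `(1 - 1/K) ^ c ≤ 1 - c/K` for `c = D / (2 (h + 1)) ≤ 1`,
shows that this loss is paid for by passing from `(D + 1) ^ α` to `(h + 1) ^ α`.
-/

open scoped Classical

open Finset Real

lemma one_sub_one_div_mem_Ioc {K : ℝ} (hK : 1 < K) : 1 - 1 / K ∈ Set.Ioc 0 1 := by
  have : 0 < 1 / K := by positivity
  have : 1 / K < 1 := (div_lt_one (by linarith)).2 hK
  constructor <;> linarith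

lemma two_rpow_le_one_add {c : ℝ} (hc0 : 0 ≤ c) (hc1 : c ≤ 1) : (2 : ℝ) ^ c ≤ 1 + c := by
  simpa [one_add_one_eq_two] using rpow_one_add_le_one_add_mul_self (s := 1) (by norm_num) hc0 hc1

lemma rpow_logb_one_sub_one_div_le {K c r : ℝ} (hK : 1 < K) (hc0 : 0 ≤ c) (hc1 : c ≤ 1)
    (hr : 1 + c ≤ r) : r ^ logb 2 (1 - 1 / K) ≤ 1 - c / K := by
  obtain ⟨hq0, hq1⟩ := one_sub_one_div_mem_Ioc hK
  calc r ^ logb 2 (1 - 1 / K)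
      ≤ ((2 : ℝ) ^ c) ^ logb 2 (1 - 1 / K) :=
        rpow_le_rpow_of_nonpos (by positivity) ((two_rpow_le_one_add hc0 hc1).trans hr)
          (logb_nonpos one_lt_two hq0.le hq1)
    _ = (1 - 1 / K) ^ c := by
        rw [← rpow_mul zero_le_two, mul_comm, rpow_mul zero_le_two,
          rpow_logb two_pos (by norm_num) hq0]
    _ ≤ 1 - c / K := by
        have := rpow_one_add_le_one_add_mul_self (s := -(1 / K)) (by linarith) hc0 hc1
        rw [← sub_eq_add_neg] at this
        linarith [show c * -(1 / K) = -(c / K) by ring]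

lemma add_one_rpow_logb_le_half_add_one_rpow {K : ℝ} (hK : 1 < K) (D : ℕ) :
    ((D : ℝ) + 1) ^ logb 2 (1 - 1 / K) ≤
      (1 - D / (2 * (((D / 2 : ℕ) : ℝ) + 1)) / K) * (((D / 2 : ℕ) : ℝ) + 1) ^ logb 2 (1 - 1 / K) := by
  set H : ℝ := ((D / 2 : ℕ) : ℝ) + 1 with hH
  have hH0 : 0 < H := by positivity
  have hHD₁ : 2 * H - 2 ≤ D := by
    rw [hH]; linarith [(by exact_mod_cast Nat.mul_div_le D 2 : (2 * (D / 2 : ℕ) : ℝ) ≤ D)]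
  have hHD₂ : (D : ℝ) ≤ 2 * H - 1 := by
    rw [hH]
    linarith [(by exact_mod_cast (by omega : D ≤ 2 * (D / 2) + 1) : (D : ℝ) ≤ 2 * (D / 2 : ℕ) + 1)]
  set c : ℝ := D / (2 * H) with hc
  have hc1 : c ≤ 1 := by rw [div_le_one (by positivity)]; linarith
  have hratio : 1 + c ≤ (D + 1) / H := by
    have : c * H = D / 2 := by rw [hc]; field_simp
    rw [le_div_iff₀ hH0, add_mul, one_mul, this]
    linarith
  calc ((D : ℝ) + 1) ^ logb 2 (1 - 1 / K)
      = ((D + 1) / H) ^ logb 2 (1 - 1 / K) * H ^ logb 2 (1 - 1 / K) := by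
        rw [div_rpow (by positivity) hH0.le, div_mul_cancel₀ _ (by positivity)]
    _ ≤ (1 - c / K) * H ^ logb 2 (1 - 1 / K) := by
        gcongr
        exact rpow_logb_one_sub_one_div_le hK (by positivity) hc1 hratio

section

variable {V : Type*} (G : SimpleGraph V)

lemma degOn_lt_card {s : Finset V} {v : V} (hv : v ∈ s) : degOn G s v < #s :=
  card_lt_card <| filter_ssubset.2 ⟨v, hv, G.irrefl⟩

variable [Fintype V]

def DegBoundedByAvgOn (s : Finset V) (K : ℝ) : Prop :=
  ∀ v ∈ s, (degOn G s v : ℝ) ≤ K * (2 * (edgesOn G s : ℝ) / (s.card : ℝ))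

lemma edgesOn_erase_add_degOn {s : Finset V} {v : V} (hv : v ∈ s) :
    edgesOn G (s.erase v) + degOn G s v = edgesOn G s := by
  set E := univ.filter (fun e : Sym2 V => e ∈ G.edgeSet ∧ ∀ x ∈ e, x ∈ s)
  have avoiding : E.filter (v ∉ ·) =
      univ.filter (fun e : Sym2 V => e ∈ G.edgeSet ∧ ∀ x ∈ e, x ∈ s.erase v) := by
    ext e
    simp only [E, mem_filter, mem_univ, true_and, mem_erase]
    grind
  have incident : E.filter (v ∈ ·) = (s.filter (G.Adj v)).image (s(v, ·)) := by
    ext e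
    induction e using Sym2.ind with
    | _ a b =>
      simp only [E, mem_filter, mem_univ, true_and, mem_image, SimpleGraph.mem_edgeSet,
        Sym2.mem_iff, Sym2.eq_iff]
      grind [SimpleGraph.irrefl, SimpleGraph.adj_symm]
  have hdeg : degOn G s v = #(E.filter (v ∈ ·)) := by
    rw [incident, card_image_of_injective _ (fun _ _ => Sym2.congr_right.1), degOn]
  rw [edgesOn, ← avoiding, hdeg, add_comm]
  exact card_filter_add_card_filter_not _

lemma exists_subset_degOn_le (h : ℕ) (s : Finset V) :
    ∃ t ⊆ s, (∀ v ∈ t, degOn G t v ≤ h) ∧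
      edgesOn G t + (h + 1) * #s ≤ edgesOn G s + (h + 1) * #t := by
  induction s using Finset.strongInduction with
  | _ s ih =>
    by_cases hs : ∀ v ∈ s, degOn G s v ≤ h
    · exact ⟨s, subset_rfl, hs, le_rfl⟩
    push Not at hs
    obtain ⟨v, hv, hdeg⟩ := hs
    obtain ⟨t, hts, ht, hE⟩ := ih (s.erase v) (erase_ssubset hv)
    refine ⟨t, hts.trans (erase_subset v s), ht, ?_⟩
    have herase := edgesOn_erase_add_degOn G hv
    rw [← card_erase_add_one hv, mul_add_one]
    omega

lemma two_mul_mul_edgesOn_lt_of_not_degBoundedByAvgOn {K : ℝ} {D : ℕ} {s : Finset V}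
    (hs : ∀ v ∈ s, degOn G s v ≤ D) (hnot : ¬ DegBoundedByAvgOn G s K) :
    2 * K * edgesOn G s < D * #s := by
  simp only [DegBoundedByAvgOn, not_forall, not_le] at hnot
  obtain ⟨v, hv, hlt⟩ := hnot
  have hcard : (0 : ℝ) < #s := by exact_mod_cast card_pos.2 ⟨v, hv⟩
  have hdeg : (degOn G s v : ℝ) ≤ D := by exact_mod_cast hs v hv
  rw [mul_div_assoc', div_lt_iff₀ hcard] at hlt
  nlinarith

lemma card_mul_le_card_of_edgesOn_le {K : ℝ} (hK : 0 < K) {D h : ℕ} {s t : Finset V}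
    (hs : 2 * K * edgesOn G s < D * #s)
    (hst : edgesOn G t + (h + 1) * #s ≤ edgesOn G s + (h + 1) * #t) :
    (#s : ℝ) * (1 - D / (2 * ((h : ℝ) + 1)) / K) ≤ #t := by
  have hst' : ((h : ℝ) + 1) * #s ≤ edgesOn G s + ((h : ℝ) + 1) * #t := by
    exact_mod_cast le_trans (Nat.le_add_left _ _) hst
  have key : (#s - #t) * (2 * K * ((h : ℝ) + 1)) ≤ D * #s := by nlinarith
  have : (#s : ℝ) - #t ≤ D / (2 * ((h : ℝ) + 1)) / K * #s := by
    rw [show D / (2 * ((h : ℝ) + 1)) / K * #s = D * #s / (2 * K * ((h : ℝ) + 1)) by field_simp]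
    exact (le_div_iff₀ (by positivity)).2 key
  linarith

theorem exists_degBoundedByAvgOn {K : ℝ} (hK : 1 < K) (D : ℕ) (s : Finset V)
    (hs : ∀ v ∈ s, degOn G s v ≤ D) :
    ∃ t, (#s : ℝ) * ((D : ℝ) + 1) ^ logb 2 (1 - 1 / K) ≤ #t ∧ DegBoundedByAvgOn G t K := by
  induction D using Nat.strong_induction_on generalizing s with
  | _ D ih =>
    by_cases hbal : DegBoundedByAvgOn G s K
    · obtain ⟨hq0, hq1⟩ := one_sub_one_div_mem_Ioc hK
      refine ⟨s, mul_le_of_le_one_right (Nat.cast_nonneg _) ?_, hbal⟩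
      exact rpow_le_one_of_one_le_of_nonpos (by simp) (logb_nonpos one_lt_two hq0.le hq1)
    have hE := two_mul_mul_edgesOn_lt_of_not_degBoundedByAvgOn G hs hbal
    have hD : 0 < D := by
      refine Nat.pos_of_ne_zero fun hD => ?_
      have : (0 : ℝ) ≤ 2 * K * edgesOn G s := by positivity
      simp only [hD, CharP.cast_eq_zero, zero_mul] at hE
      linarith
    obtain ⟨t, -, ht, hst⟩ := exists_subset_degOn_le G (D / 2) s
    obtain ⟨u, hu, hbal⟩ := ih (D / 2) (Nat.div_lt_self hD one_lt_two) t ht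
    refine ⟨u, ?_, hbal⟩
    calc (#s : ℝ) * ((D : ℝ) + 1) ^ logb 2 (1 - 1 / K)
        ≤ #s * ((1 - D / (2 * (((D / 2 : ℕ) : ℝ) + 1)) / K) *
            (((D / 2 : ℕ) : ℝ) + 1) ^ logb 2 (1 - 1 / K)) := by
          gcongr
          exact add_one_rpow_logb_le_half_add_one_rpow hK D
      _ ≤ #t * (((D / 2 : ℕ) : ℝ) + 1) ^ logb 2 (1 - 1 / K) := by
          rw [← mul_assoc]
          gcongr
          exact card_mul_le_card_of_edgesOn_le G (by linarith) hE hst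
      _ ≤ #u := hu

end

/-- Every graph on `n ≥ 1` vertices contains an induced subgraph `G* = G[s]` on at least
`n ^ (1 + log₂(1 - 1/K))` vertices whose maximum degree is at most `K` times its average
degree `2 |E(G*)| / |s|`. -/
theorem stmt6 :
    ∀ K : ℝ, 1 < K → ∀ n : ℕ, 1 ≤ n → ∀ G : SimpleGraph (Fin n),
      ∃ s : Finset (Fin n),
        (n : ℝ) ^ (1 + Real.logb 2 (1 - 1 / K)) ≤ (s.card : ℝ) ∧
        ∀ v ∈ s, (degOn G s v : ℝ) ≤ K * (2 * (edgesOn G s : ℝ) / (s.card : ℝ)) := by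
  intro K hK n hn G
  have hdeg (v : Fin n) (_ : v ∈ univ) : degOn G univ v ≤ n - 1 := by
    have := degOn_lt_card G (mem_univ v)
    rw [card_univ, Fintype.card_fin] at this
    omega
  obtain ⟨t, ht, hbal⟩ := exists_degBoundedByAvgOn G hK (n - 1) univ hdeg
  refine ⟨t, ?_, hbal⟩
  rw [card_univ, Fintype.card_fin, Nat.cast_sub hn, Nat.cast_one, sub_add_cancel] at ht
  rwa [rpow_add (by positivity), rpow_one]
end

section
/- Let 0 < ε < 1 be a real and let G = (V,E) be a simple graph on n vertices with density p > 0 (i.e., p = |E| / (n choose 2)). Then there is a subset V' ⊆ V of size n' ≥ ε^((2/ε)·ln(1/p))·n such that the induced subgraph G' = G[V'] has density p' ≥ p and every subset of t ≥ ε·n' vertices of G' spans at most (t choose 2)·p'·(1+ε) edges in G'. -/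
open scoped Classical

/-!
Repeatedly pass to a denser subset. If some set `t` of at least `ε |s|` vertices of `G[s]`
spans more than `(1 + ε)` times the density of `G[s]`, replace `s` by `t`: each such step
multiplies the density by more than `1 + ε` and the size by at least `ε`. Densities never exceed
`1`, so starting from density `p` there are at most `log (1/p) / log (1 + ε) ≤ (2/ε) log (1/p)`
steps, and the final set has at least `ε ^ ((2/ε) log (1/p)) n` vertices.
-/

noncomputable def inducedDensity {V : Type*} [Fintype V] (G : SimpleGraph V) (s : Finset V) : ℝ :=
  (edgesOn G s : ℝ) / (s.card.choose 2 : ℝ)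

def LargeSubsetsNotDenser {V : Type*} [Fintype V] (G : SimpleGraph V) (ε : ℝ) (s : Finset V) :
    Prop :=
  ∀ t ⊆ s, ε * (s.card : ℝ) ≤ (t.card : ℝ) →
    (edgesOn G t : ℝ) ≤ (t.card.choose 2 : ℝ) * inducedDensity G s * (1 + ε)

section Edges

variable {V : Type*} [Fintype V] (G : SimpleGraph V) (s : Finset V)

lemma edgesOn_le_choose_two : edgesOn G s ≤ s.card.choose 2 := by
  have hsub : (Finset.univ.filter (fun e : Sym2 V => e ∈ G.edgeSet ∧ ∀ v ∈ e, v ∈ s)) ⊆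
      (G.comap ((↑) : s → V)).edgeFinset.image (Sym2.map (↑)) := by
    intro e he
    obtain ⟨hedge, hmem⟩ := (Finset.mem_filter.mp he).2
    induction e using Sym2.ind with
    | h a b =>
      refine Finset.mem_image.mpr ⟨s(⟨a, hmem a (Sym2.mem_mk_left a b)⟩,
        ⟨b, hmem b (Sym2.mem_mk_right a b)⟩), ?_, rfl⟩
      exact SimpleGraph.mem_edgeFinset.mpr hedge
  calc edgesOn G s ≤ _ := Finset.card_le_card hsub
    _ ≤ (G.comap ((↑) : s → V)).edgeFinset.card := Finset.card_image_le
    _ ≤ (Fintype.card s).choose 2 := SimpleGraph.card_edgeFinset_le_card_choose_two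
    _ = s.card.choose 2 := by rw [Fintype.card_coe]

lemma choose_two_pos_of_edgesOn_pos (h : 0 < edgesOn G s) : 0 < s.card.choose 2 := by
  obtain ⟨e, he⟩ := Finset.card_pos.mp h
  obtain ⟨hedge, hmem⟩ := (Finset.mem_filter.mp he).2
  induction e using Sym2.ind with
  | h a b =>
    have hab : a ≠ b := ((SimpleGraph.mem_edgeSet G).mp hedge).ne
    have hpair : ({a, b} : Finset V) ⊆ s := by
      simpa [Finset.insert_subset_iff] using hmem
    refine Nat.choose_pos ?_
    calc 2 = ({a, b} : Finset V).card := (Finset.card_pair hab).symm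
      _ ≤ s.card := Finset.card_le_card hpair

lemma inducedDensity_nonneg : 0 ≤ inducedDensity G s := by
  unfold inducedDensity; positivity

lemma inducedDensity_le_one : inducedDensity G s ≤ 1 :=
  div_le_one_of_le₀ (by exact_mod_cast edgesOn_le_choose_two G s) (Nat.cast_nonneg _)

lemma choose_two_pos_of_inducedDensity_pos (h : 0 < inducedDensity G s) :
    (0 : ℝ) < s.card.choose 2 := by
  by_contra! hle
  have hzero : (s.card.choose 2 : ℝ) = 0 := le_antisymm hle (Nat.cast_nonneg _)
  simp [inducedDensity, hzero] at h

lemma exists_ssubset_large_denser_of_not_largeSubsetsNotDenser {ε : ℝ} (hε : 0 < ε)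
    (h : ¬ LargeSubsetsNotDenser G ε s) :
    ∃ t ⊂ s, ε * (s.card : ℝ) ≤ (t.card : ℝ) ∧
      inducedDensity G s * (1 + ε) < inducedDensity G t := by
  simp only [LargeSubsetsNotDenser, not_forall, not_le] at h
  obtain ⟨t, hts, hlarge, hdense⟩ := h
  have hd := inducedDensity_nonneg G s
  have hedges : 0 < edgesOn G t := by
    by_contra! h0
    rw [Nat.le_zero.mp h0, Nat.cast_zero] at hdense
    have : (0 : ℝ) ≤ (t.card.choose 2 : ℝ) * inducedDensity G s * (1 + ε) := by positivity
    linarith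
  have hdenser : inducedDensity G s * (1 + ε) < inducedDensity G t := by
    have hpos : (0 : ℝ) < t.card.choose 2 := by
      exact_mod_cast choose_two_pos_of_edgesOn_pos G t hedges
    exact (lt_div_iff₀ hpos).mpr (by linarith)
  refine ⟨t, ssubset_of_subset_of_ne hts ?_, hlarge, hdenser⟩
  rintro rfl
  nlinarith

end Edges

noncomputable def sizeFactor (ε q : ℝ) : ℝ := ε ^ ((2 / ε) * Real.log (1 / q))

lemma half_le_log_one_add {ε : ℝ} (hε0 : 0 ≤ ε) (hε1 : ε ≤ 1) : ε / 2 ≤ Real.log (1 + ε) :=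
  calc ε / 2 ≤ ε / (1 + ε) := div_le_div_of_nonneg_left hε0 (by positivity) (by linarith)
    _ = 1 - (1 + ε)⁻¹ := by field_simp; ring
    _ ≤ Real.log (1 + ε) := Real.one_sub_inv_le_log_of_pos (by positivity)

lemma sizeFactor_le_one {ε q : ℝ} (hε0 : 0 ≤ ε) (hε1 : ε ≤ 1) (hq0 : 0 < q) (hq1 : q ≤ 1) :
    sizeFactor ε q ≤ 1 :=
  Real.rpow_le_one hε0 hε1
    (mul_nonneg (by positivity) (Real.log_nonneg (one_le_one_div hq0 hq1)))

lemma sizeFactor_le_mul_sizeFactor_mul_one_add {ε q : ℝ} (hε0 : 0 < ε) (hε1 : ε ≤ 1)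
    (hq0 : 0 < q) :
    sizeFactor ε q ≤ ε * sizeFactor ε (q * (1 + ε)) := by
  have hlog : Real.log (1 / (q * (1 + ε))) = Real.log (1 / q) - Real.log (1 + ε) := by
    rw [one_div, one_div, Real.log_inv, Real.log_inv, Real.log_mul hq0.ne' (by positivity)]
    ring
  have hstep : 1 ≤ (2 / ε) * Real.log (1 + ε) := by
    rw [div_mul_eq_mul_div, le_div_iff₀ hε0]
    linarith [half_le_log_one_add hε0.le hε1]
  calc sizeFactor ε q
      ≤ ε ^ ((2 / ε) * Real.log (1 / (q * (1 + ε))) + 1) := by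
        refine Real.rpow_le_rpow_of_exponent_ge hε0 hε1 ?_
        rw [hlog]
        linarith
    _ = ε * sizeFactor ε (q * (1 + ε)) := by
        rw [Real.rpow_add hε0, Real.rpow_one, mul_comm, sizeFactor]

lemma exists_subset_largeSubsetsNotDenser {V : Type*} [Fintype V] (G : SimpleGraph V)
    {ε : ℝ} (hε0 : 0 < ε) (hε1 : ε ≤ 1) (s : Finset V) {q : ℝ} (hq : 0 < q)
    (hqs : q ≤ inducedDensity G s) :
    ∃ s' ⊆ s, q ≤ inducedDensity G s' ∧ sizeFactor ε q * (s.card : ℝ) ≤ (s'.card : ℝ) ∧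
      LargeSubsetsNotDenser G ε s' := by
  induction s using Finset.strongInduction generalizing q with
  | H s ih =>
  by_cases hgood : LargeSubsetsNotDenser G ε s
  · have hq1 : q ≤ 1 := hqs.trans (inducedDensity_le_one G s)
    refine ⟨s, subset_rfl, hqs, ?_, hgood⟩
    exact mul_le_of_le_one_left (Nat.cast_nonneg _) (sizeFactor_le_one hε0.le hε1 hq hq1)
  obtain ⟨t, hts, hlarge, hdenser⟩ :=
    exists_ssubset_large_denser_of_not_largeSubsetsNotDenser G s hε0 hgood
  have hqt : q * (1 + ε) ≤ inducedDensity G t := by nlinarith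
  obtain ⟨s', hs't, hqs', hsize, hs'good⟩ := ih t hts (by positivity) hqt
  refine ⟨s', hs't.trans hts.subset, by nlinarith, ?_, hs'good⟩
  have hfactor := sizeFactor_le_mul_sizeFactor_mul_one_add hε0 hε1 hq
  have hfactor_nonneg : 0 ≤ sizeFactor ε (q * (1 + ε)) := Real.rpow_nonneg hε0.le _
  calc sizeFactor ε q * (s.card : ℝ)
      ≤ sizeFactor ε (q * (1 + ε)) * (ε * (s.card : ℝ)) := by
        nlinarith [(Nat.cast_nonneg s.card : (0 : ℝ) ≤ _)]
    _ ≤ sizeFactor ε (q * (1 + ε)) * (t.card : ℝ) := by gcongr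
    _ ≤ (s'.card : ℝ) := hsize

/-- Every graph `G` on `n` vertices of density `p > 0` contains an induced subgraph
`G' = G[s]` on `n' ≥ ε^((2/ε) ln(1/p)) * n` vertices of density `p' ≥ p`, in which every
set of `t ≥ ε n'` vertices spans at most `(t choose 2) p' (1+ε)` edges. -/
theorem stmt7 :
    ∀ ε : ℝ, 0 < ε → ε < 1 → ∀ n : ℕ, ∀ G : SimpleGraph (Fin n), ∀ p : ℝ,
      p = (edgesOn G Finset.univ : ℝ) / (n.choose 2 : ℝ) → 0 < p →
      ∃ s : Finset (Fin n), ∃ p' : ℝ,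
        p' = (edgesOn G s : ℝ) / (s.card.choose 2 : ℝ) ∧
        p ≤ p' ∧
        ε ^ ((2 / ε) * Real.log (1 / p)) * (n : ℝ) ≤ (s.card : ℝ) ∧
        ∀ t : Finset (Fin n), t ⊆ s → ε * (s.card : ℝ) ≤ (t.card : ℝ) →
          (edgesOn G t : ℝ) ≤ (t.card.choose 2 : ℝ) * p' * (1 + ε) := by
  intro ε hε0 hε1 n G p hp hppos
  have hcard : (Finset.univ : Finset (Fin n)).card = n := Finset.card_fin n
  have hpuniv : p ≤ inducedDensity G Finset.univ := by rw [inducedDensity, hcard, hp]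
  obtain ⟨s, -, hps, hsize, hgood⟩ :=
    exists_subset_largeSubsetsNotDenser G hε0 hε1.le Finset.univ hppos hpuniv
  rw [hcard] at hsize
  exact ⟨s, inducedDensity G s, rfl, hps, hsize, hgood⟩
end

section
/- For every real a with 0 < a < 1 there exist ε₀ > 0 and, for each ε with 0 < ε < ε₀, a threshold n₀ such that the following holds for all n ≥ n₀. Let G = (V,E) be a simple graph on n vertices with density p = |E|/(n choose 2) ≥ n^(−a), and suppose that every subset of t ≥ ε·n vertices of G spans at most (t choose 2)·p·(1+ε) edges. Then for every subset U ⊆ V with |U| = ⌈ε·n⌉, the number of edges of G between U and V∖U is at most ε·n²·p·(1 + 2√ε). -/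
open scoped Classical

/-- Number of edges of `G` with one endpoint in `s` and the other in `t`
(for disjoint `s`, `t`). -/
noncomputable def edgesBetween {V : Type*} (G : SimpleGraph V) (s t : Finset V) : ℕ :=
  ((s ×ˢ t).filter (fun p => G.Adj p.1 p.2)).card


/-!
Put `s = √ε`, `W = V ∖ U` and `k = ⌈s n⌉`, and apply the local sparseness hypothesis
to `U ∪ T` for every `k`-subset `T` of `W`. On average over `T`, an edge between `U` and `W`
survives in `U ∪ T` with probability `k / |W|` and an edge inside `W` with probability
`k (k - 1) / (|W| (|W| - 1))`. Eliminating the edges inside `W` through the total edge count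
`p (n choose 2)` turns the averaged hypothesis into an upper bound on `e(U, W)`; since `k` is
chosen of order `√ε n`, the error terms add up to the factor `1 + 2 √ε`.
-/

open Finset

lemma card_filter_powersetCard_compl_subset_union {V : Type*} [Fintype V] [DecidableEq V]
    (U B : Finset V) {k : ℕ} (hk : #(B \ U) ≤ k) :
    #{T ∈ powersetCard k Uᶜ | B ⊆ U ∪ T} = (#Uᶜ - #(B \ U)).choose (k - #(B \ U)) := by
  have hsub : ∀ T, B ⊆ U ∪ T ↔ B \ U ⊆ T := fun T => sdiff_le_iff.symm
  simp_rw [hsub]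
  exact card_filter_powersetCard_subset _ _ _ (fun v hv => by simp_all) hk

section EdgeCounting

variable {V : Type*} [Fintype V] [DecidableEq V] (G : SimpleGraph V) (U : Finset V)

lemma edgesOn_eq_card_filter (s : Finset V) :
    edgesOn G s = #{e ∈ G.edgeFinset | ∀ v ∈ e, v ∈ s} := by
  rw [edgesOn]; congr 1; ext e; simp

lemma edgesBetween_compl_eq_card_filter :
    edgesBetween G U Uᶜ =
      #{e ∈ G.edgeFinset | ¬(∀ v ∈ e, v ∈ U) ∧ ¬(∀ v ∈ e, v ∈ Uᶜ)} := by
  refine card_bij (fun p _ => s(p.1, p.2)) ?_ ?_ ?_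
  · rintro ⟨x, y⟩ h
    simp_all
  · rintro ⟨x, y⟩ h ⟨x', y'⟩ h' he
    simp only [mem_filter, mem_product, mem_compl] at h h'
    rcases Sym2.eq_iff.1 he with ⟨rfl, rfl⟩ | ⟨rfl, rfl⟩
    · rfl
    · exact absurd h'.1.1 h.1.2
  · intro e he
    induction e with
    | _ x y =>
      simp only [mem_filter, SimpleGraph.mem_edgeFinset, SimpleGraph.mem_edgeSet,
        Sym2.forall_mem_pair, mem_compl, not_and_or, not_not] at he
      by_cases hx : x ∈ U
      · exact ⟨(x, y), by simp_all, rfl⟩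
      · exact ⟨(y, x), by simp_all [G.adj_comm], Sym2.eq_swap⟩

lemma edgesOn_univ_eq_add :
    edgesOn G univ = edgesOn G U + edgesBetween G U Uᶜ + edgesOn G Uᶜ := by
  simp only [edgesOn_eq_card_filter, edgesBetween_compl_eq_card_filter, card_filter,
    ← sum_add_distrib]
  refine sum_congr rfl fun e _ => ?_
  induction e with
  | _ x y => by_cases hx : x ∈ U <;> by_cases hy : y ∈ U <;> simp [hx, hy]

lemma sum_edgesOn_union_powersetCard {k : ℕ} (hk : 2 ≤ k) :
    ∑ T ∈ powersetCard k Uᶜ, edgesOn G (U ∪ T)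
      = (#Uᶜ).choose k * edgesOn G U + (#Uᶜ - 1).choose (k - 1) * edgesBetween G U Uᶜ
        + (#Uᶜ - 2).choose (k - 2) * edgesOn G Uᶜ := by
  simp only [edgesOn_eq_card_filter, edgesBetween_compl_eq_card_filter, card_filter, mul_sum,
    ← sum_add_distrib]
  rw [sum_comm]
  refine sum_congr rfl fun e he => ?_
  induction e with
  | _ x y =>
    have hxy : x ≠ y := (SimpleGraph.mem_edgeFinset.1 he).ne
    have hpair : #({x, y} \ U) ≤ k := (card_le_card sdiff_subset).trans ((card_le_two).trans hk)
    have hmem : ∀ T, (∀ v ∈ s(x, y), v ∈ U ∪ T) ↔ {x, y} ⊆ U ∪ T := by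
      simp [insert_subset_iff]
    simp only [hmem]
    rw [← card_filter, card_filter_powersetCard_compl_subset_union U {x, y} hpair]
    by_cases hx : x ∈ U <;> by_cases hy : y ∈ U <;>
      simp [hx, hy, hxy, sdiff_eq_filter, filter_insert, filter_singleton]

lemma averaged_edge_bound {k : ℕ} (hk : 2 ≤ k) (hkw : k ≤ #Uᶜ) {B : ℝ}
    (hB : ∀ T ∈ powersetCard k Uᶜ, (edgesOn G (U ∪ T) : ℝ) ≤ B) :
    (#Uᶜ : ℝ) * (#Uᶜ - 1) * edgesOn G U + k * (#Uᶜ - 1) * edgesBetween G U Uᶜ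
      + k * (k - 1) * edgesOn G Uᶜ ≤ (#Uᶜ : ℝ) * (#Uᶜ - 1) * B := by
  have hsum :
      ((∑ T ∈ powersetCard k Uᶜ, edgesOn G (U ∪ T) : ℕ) : ℝ) ≤ (#Uᶜ).choose k * B := by
    simpa using sum_le_card_nsmul _ _ _ hB
  rw [sum_edgesOn_union_powersetCard G U hk] at hsum
  obtain ⟨w, hw⟩ : ∃ w, #Uᶜ = w + 2 := ⟨#Uᶜ - 2, by omega⟩
  obtain ⟨j, rfl⟩ : ∃ j, k = j + 2 := ⟨k - 2, by omega⟩
  rw [hw] at hsum hkw ⊢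
  have h1 : ((w + 2 : ℕ) : ℝ) * (w + 1).choose (j + 1) = (w + 2).choose (j + 2) * (j + 2) := by
    exact_mod_cast Nat.add_one_mul_choose_eq (w + 1) (j + 1)
  have h2 : ((w + 1 : ℕ) : ℝ) * w.choose j = (w + 1).choose (j + 1) * (j + 1) := by
    exact_mod_cast Nat.add_one_mul_choose_eq w j
  have hC : (0 : ℝ) < (w + 2).choose (j + 2) := by exact_mod_cast Nat.choose_pos hkw
  simp only [Nat.add_sub_cancel, Nat.reduceSubDiff] at hsum
  push_cast at hsum h1 h2 ⊢
  refine le_of_mul_le_mul_left ?_ hC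
  calc _ = ((w : ℝ) + 2) * (w + 1) * ((w + 2).choose (j + 2) * edgesOn G U
        + (w + 1).choose (j + 1) * edgesBetween G U Uᶜ + w.choose j * edgesOn G Uᶜ) := by
          linear_combination
            (-((w : ℝ) + 1) * edgesBetween G U Uᶜ - (j + 1) * edgesOn G Uᶜ) * h1
              - ((w : ℝ) + 2) * edgesOn G Uᶜ * h2
    _ ≤ ((w : ℝ) + 2) * (w + 1) * ((w + 2).choose (j + 2) * B) := by gcongr
    _ = _ := by ring

lemma mul_edgesBetween_compl_add_le {k : ℕ} (hk : 2 ≤ k) (hkw : k ≤ #Uᶜ) {B : ℝ}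
    (hB : ∀ T ∈ powersetCard k Uᶜ, (edgesOn G (U ∪ T) : ℝ) ≤ B) :
    k * (#Uᶜ - k) * edgesBetween G U Uᶜ + k * (k - 1) * edgesOn G univ
      ≤ (#Uᶜ : ℝ) * (#Uᶜ - 1) * B := by
  have havg := averaged_edge_bound G U hk hkw hB
  have htotal : (edgesOn G univ : ℝ) = edgesOn G U + edgesBetween G U Uᶜ + edgesOn G Uᶜ := by
    exact_mod_cast edgesOn_univ_eq_add G U
  have hkw' : (k : ℝ) ≤ #Uᶜ := by exact_mod_cast hkw
  have hk' : (1 : ℝ) ≤ k := by exact_mod_cast hk.trans' one_le_two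
  have hdrop : 0 ≤ (#Uᶜ - k) * (#Uᶜ + k - 1) * (edgesOn G U : ℝ) :=
    mul_nonneg (mul_nonneg (by linarith) (by linarith)) (Nat.cast_nonneg _)
  rw [htotal]
  linarith

end EdgeCounting

lemma polynomial_le_of_le_one_hundredth {s : ℝ} (hs0 : 0 ≤ s) (hs : s ≤ 1 / 100) :
    (1 - s ^ 2) ^ 2 * (1 + s + s ^ 4) ^ 2 * (1 + s ^ 2) - (1 - s ^ 4) ^ 2
      ≤ 2 * s * (1 - s - s ^ 2 - s ^ 3) * (1 + 2 * s) := by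
  have h1 : s ^ 2 ≤ s / 100 := by nlinarith
  have hq : 0 ≤ 1 - 2 * s - 4 * s ^ 2 - 2 * s ^ 3 - s ^ 8 / 2 - s ^ 9 - s ^ 12 / 2 := by
    have : s ^ 3 ≤ s ^ 2 := by nlinarith
    have : s ^ 8 ≤ s ^ 2 := pow_le_pow_of_le_one hs0 (by linarith) (by norm_num)
    have : s ^ 9 ≤ s ^ 2 := pow_le_pow_of_le_one hs0 (by linarith) (by norm_num)
    have : s ^ 12 ≤ s ^ 2 := pow_le_pow_of_le_one hs0 (by linarith) (by norm_num)
    linarith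
  have : 0 ≤ s ^ 4 + s ^ 6 / 2 + s ^ 7 + s ^ 10 / 2 := by positivity
  linarith [mul_nonneg (sq_nonneg s) hq, mul_nonneg (sq_nonneg s) this]

/- Up to lower-order terms absorbed by `2 ≤ s ^ 5 * N`, this is `N ^ 4 * s ^ 2 / 2` times
`polynomial_le_of_le_one_hundredth`. -/
lemma averaging_inequality_of_sizes {s N u k : ℝ} (hs0 : 0 < s) (hs : s ≤ 1 / 100)
    (hN : 2 ≤ s ^ 5 * N) (hu : s ^ 2 * N ≤ u) (hu' : u ≤ s ^ 2 * N + 1) (hk : s * N ≤ k)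
    (hk' : k ≤ s * N + 1) :
    (N - u) * (N - u - 1) * ((u + k) * (u + k - 1) / 2 * (1 + s ^ 2))
        - k * (k - 1) * (N * (N - 1) / 2)
      ≤ k * (N - u - k) * (s ^ 2 * N ^ 2 * (1 + 2 * s)) := by
  have hN0 : 0 < N := pos_of_mul_pos_right (a := s ^ 5) (by linarith) (by positivity)
  have hstep : ∀ j : ℕ, s ^ (j + 1) * N ≤ s ^ j * N / 100 := fun j =>
    calc s ^ (j + 1) * N = s ^ j * N * s := by ring
      _ ≤ s ^ j * N * (1 / 100) := mul_le_mul_of_nonneg_left hs (by positivity)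
      _ = s ^ j * N / 100 := by ring
  have h1 := hstep 0
  have h2 := hstep 1
  have h3 := hstep 2
  have h4 := hstep 3
  have h5 := hstep 4
  have hw : N - u ≤ N * (1 - s ^ 2) := by linarith
  have hw0 : 0 ≤ N - u := by linarith
  have hwk : N * (1 - s - s ^ 2 - s ^ 3) ≤ N - u - k := by linarith
  have huk : u + k ≤ s * N * (1 + s + s ^ 4) := by linarith
  have hA : (N - u) * (N - u - 1) ≤ (N * (1 - s ^ 2)) ^ 2 := by
    nlinarith [mul_le_mul hw hw hw0 (hw0.trans hw)]
  have hB : (u + k) * (u + k - 1) ≤ (s * N * (1 + s + s ^ 4)) ^ 2 := by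
    have huk0 : 0 ≤ u + k := by linarith
    nlinarith [mul_le_mul huk huk huk0 (huk0.trans huk)]
  have hC : (s * N) * (s * N * (1 - s ^ 4)) ≤ k * (k - 1) :=
    mul_le_mul hk (by linarith) (by linarith) (by linarith)
  have hD : N * (N * (1 - s ^ 4)) ≤ N * (N - 1) :=
    mul_le_mul_of_nonneg_left (by linarith) hN0.le
  have hE : s * N * (N * (1 - s - s ^ 2 - s ^ 3)) ≤ k * (N - u - k) :=
    mul_le_mul hk hwk (by linarith) (by linarith)
  have hAB := mul_le_mul_of_nonneg_right
    (mul_le_mul hA hB (mul_nonneg (by linarith) (by linarith)) (by positivity))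
    (by positivity : (0 : ℝ) ≤ (1 + s ^ 2) / 2)
  have hs4 : s ^ 4 ≤ 1 := pow_le_one₀ hs0.le (by linarith)
  have hCD := mul_le_mul hC hD (by positivity) (mul_nonneg (by linarith) (by linarith))
  have hP := mul_le_mul_of_nonneg_left (polynomial_le_of_le_one_hundredth hs0.le hs)
    (by positivity : (0 : ℝ) ≤ s * N ^ 4 * (s / 2))
  have hR := mul_le_mul_of_nonneg_right hE
    (by positivity : (0 : ℝ) ≤ s ^ 2 * N ^ 2 * (1 + 2 * s))
  linarith

theorem edgesBetween_compl_le_of_locally_sparse {V : Type*} [Fintype V] [DecidableEq V]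
    (G : SimpleGraph V) (U : Finset V) {s p : ℝ} (hs0 : 0 < s) (hs : s ≤ 1 / 100)
    (hN : 2 ≤ s ^ 5 * Fintype.card V)
    (hp : p = edgesOn G univ / (Fintype.card V).choose 2)
    (hsparse : ∀ t : Finset V, s ^ 2 * Fintype.card V ≤ #t →
      (edgesOn G t : ℝ) ≤ (#t).choose 2 * p * (1 + s ^ 2))
    (hU : #U = ⌈s ^ 2 * Fintype.card V⌉₊) :
    (edgesBetween G U Uᶜ : ℝ) ≤ s ^ 2 * Fintype.card V ^ 2 * p * (1 + 2 * s) := by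
  set N := Fintype.card V
  set k := ⌈s * N⌉₊
  have hN0 : (0 : ℝ) < N := pos_of_mul_pos_right (a := s ^ 5) (by linarith) (by positivity)
  have hu : s ^ 2 * N ≤ #U := hU ▸ Nat.le_ceil _
  have hu' : (#U : ℝ) ≤ s ^ 2 * N + 1 := hU ▸ (Nat.ceil_lt_add_one (by positivity)).le
  have hk : s * N ≤ k := Nat.le_ceil _
  have hk' : (k : ℝ) ≤ s * N + 1 := (Nat.ceil_lt_add_one (by positivity)).le
  have hs1 : s ≤ 1 := by linarith
  have hsN : 2 ≤ s * N := hN.trans (by gcongr; exact pow_le_of_le_one hs0.le hs1 (by norm_num))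
  have hw : (#Uᶜ : ℝ) = N - #U := by rw [card_compl, Nat.cast_sub (card_le_univ U)]
  have hsN' : s * N + s ^ 2 * N + 3 ≤ N := by nlinarith
  have hk2 : 2 ≤ k := by exact_mod_cast hsN.trans hk
  have hkw : k < #Uᶜ := by exact_mod_cast (show (k : ℝ) < #Uᶜ by rw [hw]; linarith)
  have hB : ∀ T ∈ powersetCard k Uᶜ,
      (edgesOn G (U ∪ T) : ℝ) ≤ (#U + k) * (#U + k - 1) / 2 * p * (1 + s ^ 2) := by
    intro T hT
    rw [mem_powersetCard, subset_compl_iff_disjoint_left] at hT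
    have hUT : (#(U ∪ T) : ℝ) = #U + k := by
      rw [card_union_of_disjoint hT.1, hT.2, Nat.cast_add]
    have := hsparse (U ∪ T) (by rw [hUT]; linarith)
    rwa [Nat.cast_choose_two, hUT] at this
  have hcross := mul_edgesBetween_compl_add_le G U hk2 hkw.le hB
  have hE : (edgesOn G univ : ℝ) = p * (N * (N - 1) / 2) := by
    rw [hp, Nat.cast_choose_two, div_mul_cancel₀]
    exact (div_pos (mul_pos hN0 (by linarith)) two_pos).ne'
  have hp0 : 0 ≤ p := hp ▸ by positivity
  have hkey := mul_le_mul_of_nonneg_right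
    (averaging_inequality_of_sizes hs0 hs hN hu hu' hk hk') hp0
  have hkw' : (k : ℝ) < #Uᶜ := by exact_mod_cast hkw
  refine le_of_mul_le_mul_left (a := (k : ℝ) * (#Uᶜ - k)) ?_
    (mul_pos (by positivity) (sub_pos.2 hkw'))
  rw [hE, hw] at hcross
  rw [hw]
  linarith

/-- For `0 < a < 1`, for all small enough `ε` and large enough `n`: if a graph `G` on `n`
vertices has density `p ≥ n^(-a)` and every `t ≥ ε n` vertices span at most
`(t choose 2) p (1+ε)` edges, then every vertex set `U` of size `⌈ε n⌉` has at most
`ε n² p (1 + 2√ε)` edges to its complement. -/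
theorem stmt8 :
    ∀ a : ℝ, 0 < a → a < 1 → ∃ ε₀ : ℝ, 0 < ε₀ ∧ ∀ ε : ℝ, 0 < ε → ε < ε₀ →
      ∃ n₀ : ℕ, ∀ n : ℕ, n₀ ≤ n → ∀ G : SimpleGraph (Fin n), ∀ p : ℝ,
        p = (edgesOn G Finset.univ : ℝ) / (n.choose 2 : ℝ) →
        (n : ℝ) ^ (-a) ≤ p →
        (∀ t : Finset (Fin n), ε * (n : ℝ) ≤ (t.card : ℝ) →
          (edgesOn G t : ℝ) ≤ (t.card.choose 2 : ℝ) * p * (1 + ε)) →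
        ∀ U : Finset (Fin n), U.card = ⌈ε * (n : ℝ)⌉₊ →
          (edgesBetween G U Uᶜ : ℝ) ≤ ε * (n : ℝ) ^ 2 * p * (1 + 2 * Real.sqrt ε) := by
  intro _ _ _
  refine ⟨1 / 10000, by norm_num, fun ε hε hε₀ => ?_⟩
  set s := Real.sqrt ε
  have hs0 : 0 < s := Real.sqrt_pos.2 hε
  have hsε : s ^ 2 = ε := Real.sq_sqrt hε.le
  have hs : s ≤ 1 / 100 := by nlinarith
  refine ⟨⌈2 / s ^ 5⌉₊, fun n hn G p hp _ hsparse U hU => ?_⟩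
  have hN : 2 ≤ s ^ 5 * Fintype.card (Fin n) := by
    rw [Fintype.card_fin, ← div_le_iff₀' (by positivity)]
    exact Nat.ceil_le.1 hn
  rw [← hsε] at hsparse hU ⊢
  exact edgesBetween_compl_le_of_locally_sparse G U hs0 hs hN (by simpa using hp)
    (by simpa using hsparse) (by simpa using hU) |>.trans_eq (by simp)
end
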